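/- Let Δ ≥ 2 be an integer and let G be a finite simple graph with no isolated vertices such that the maximum degree of G equals Δ, the matching number of G equals ⌈Δ/2⌉, and the number of edges of G equals Δ·⌈Δ/2⌉ + ⌊Δ/2⌋. Then for every vertex x of G, the matching number of G \ x equals the matching number of G. -/

import Mathlib

/-- The number of edges of a simple graph. -/
noncomputable def edgeCount {V : Type*} (G : SimpleGraph V) : ℕ := G.edgeSet.ncard

/-- The independence number: largest size of a set of pairwise nonadjacent vertices. -/
noncomputable def indNum {V : Type*} (G : SimpleGraph V) : ℕ :=
  sSup {n | ∃ s : Finset V, (∀ x ∈ s, ∀ y ∈ s, ¬ G.Adj x y) ∧ s.card = n}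

/-- A finite set of edges of `G` forming a matching (pairwise vertex-disjoint edges). -/
def IsMatchingFinset {V : Type*} (G : SimpleGraph V) (m : Finset (Sym2 V)) : Prop :=
  ↑m ⊆ G.edgeSet ∧ ∀ e ∈ m, ∀ f ∈ m, e ≠ f → ∀ v : V, ¬(v ∈ e ∧ v ∈ f)

/-- The matching number: largest size of a matching. -/
noncomputable def matNum {V : Type*} (G : SimpleGraph V) : ℕ :=
  sSup {n | ∃ m : Finset (Sym2 V), IsMatchingFinset G m ∧ m.card = n}

/-- The maximum degree. -/
noncomputable def maxDeg {V : Type*} (G : SimpleGraph V) : ℕ :=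
  ⨆ v, (G.neighborSet v).ncard

/-- `Gext α ν`: disjoint union of `K_{2ν+1}` with `α - 1` isolated vertices. -/
def Gext (α ν : ℕ) : SimpleGraph (Fin (2*ν+1) ⊕ Fin (α-1)) :=
  SimpleGraph.fromRel (fun x y => x.isLeft = true ∧ y.isLeft = true)

/-- `Hext α ν`: the complete split graph: clique of size `ν` joined to an
independent set of size `α`. -/
def Hext (α ν : ℕ) : SimpleGraph (Fin ν ⊕ Fin α) :=
  SimpleGraph.fromRel (fun x _ => x.isLeft = true)

/-- `Fext α Δ`: disjoint union of `α` copies of `K_{Δ+1}`. -/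
def Fext (α Δ : ℕ) : SimpleGraph (Fin α × Fin (Δ+1)) :=
  SimpleGraph.fromRel (fun x y => x.1 = y.1)

/-- `Jgraph Δ`: for even `Δ` this is `K_{Δ+1}`; for odd `Δ = 2j-1` it is `K_{2j}`
minus a perfect matching (vertices `2k, 2k+1` are nonadjacent) together with an extra
vertex (the last one) joined to all but one (vertex `0`) of the other vertices. -/
def Jgraph (Δ : ℕ) : SimpleGraph (Fin (2*((Δ+1)/2)+1)) :=
  SimpleGraph.fromRel (fun x y =>
    if Δ % 2 = 0 then True
    else (x.val < 2*((Δ+1)/2) ∧ y.val < 2*((Δ+1)/2) ∧ x.val/2 ≠ y.val/2) ∨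
         (x.val = 2*((Δ+1)/2) ∧ 0 < y.val ∧ y.val < 2*((Δ+1)/2)))

/-- `G` is edge-extremal for `(α, ν)`: it has independence number `α`, matching number `ν`,
and the maximum number of edges among all finite simple graphs with independence number `α`
and matching number `ν`. -/
def EdgeExtremal {V : Type*} [Fintype V] (G : SimpleGraph V) (α ν : ℕ) : Prop :=
  indNum G = α ∧ matNum G = ν ∧
    ∀ (W : Type) [Fintype W] (H : SimpleGraph W),
      indNum H = α → matNum H = ν → edgeCount H ≤ edgeCount G

/-!
If deleting `x` lowered the matching number `ν`, then `x` would be covered by every maximum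
matching, so removing the at most `Δ` edges at `x` would lower `ν` while leaving a graph with
`2ν < Δ`. Such a graph has at most `Δν` edges: delete vertices covered by every maximum matching
one at a time until every vertex is missed by some maximum matching; then, by Gallai's lemma, each
component contains at most one unmatched vertex, so the graph has at most `ν(2ν + 1) ≤ Δν` edges.
Hence `|E(G)| ≤ Δ⌈Δ/2⌉ < Δ⌈Δ/2⌉ + ⌊Δ/2⌋`.
-/

section

open Finset

variable {V : Type*} {G : SimpleGraph V} {M N : Finset (Sym2 V)} {u v w : V}

def IsUncovered (M : Finset (Sym2 V)) (v : V) : Prop := ∀ e ∈ M, v ∉ e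

def IsMaximumMatching (G : SimpleGraph V) (M : Finset (Sym2 V)) : Prop :=
  IsMatchingFinset G M ∧ #M = matNum G

lemma IsUncovered.mono (hv : IsUncovered M v) (h : N ⊆ M) : IsUncovered N v :=
  fun e he => hv e (h he)

@[simp] lemma isUncovered_insert_mk [DecidableEq V] :
    IsUncovered (insert s(u, w) M) v ↔ v ≠ u ∧ v ≠ w ∧ IsUncovered M v := by
  simp [IsUncovered, and_assoc]

lemma exists_mk_mem_of_not_isUncovered (hv : ¬ IsUncovered M v) : ∃ w, s(v, w) ∈ M := by
  simp only [IsUncovered, not_forall, not_not] at hv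
  obtain ⟨e, he, hve⟩ := hv
  obtain ⟨w, rfl⟩ := Sym2.mem_iff_exists.mp hve
  exact ⟨w, he⟩

namespace IsMatchingFinset

lemma mono (hM : IsMatchingFinset G M) (h : N ⊆ M) : IsMatchingFinset G N :=
  ⟨(coe_subset.mpr h).trans hM.1, fun e he f hf => hM.2 e (h he) f (h hf)⟩

lemma adj (hM : IsMatchingFinset G M) (h : s(u, w) ∈ M) : G.Adj u w := hM.1 h

lemma eq_of_mem (hM : IsMatchingFinset G M) {e f : Sym2 V} (he : e ∈ M) (hf : f ∈ M)
    (hve : v ∈ e) (hvf : v ∈ f) : e = f := by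
  by_contra hne
  exact hM.2 e he f hf hne v ⟨hve, hvf⟩

lemma isUncovered_erase [DecidableEq V] (hM : IsMatchingFinset G M) {e : Sym2 V} (he : e ∈ M)
    (hv : v ∈ e) : IsUncovered (M.erase e) v :=
  fun _ hf hvf => (mem_erase.mp hf).1 (hM.eq_of_mem (mem_of_mem_erase hf) he hvf hv)

protected lemma insert [DecidableEq V] (hM : IsMatchingFinset G M) (hadj : G.Adj u w)
    (hu : IsUncovered M u) (hw : IsUncovered M w) : IsMatchingFinset G (insert s(u, w) M) := by
  refine ⟨?_, ?_⟩
  · rw [coe_insert, Set.insert_subset_iff]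
    exact ⟨hadj, hM.1⟩
  · intro e he f hf hne x ⟨hxe, hxf⟩
    have huw : ∀ g ∈ M, x ∈ s(u, w) → x ∉ g := fun g hg hx =>
      (Sym2.mem_iff.mp hx).elim (fun h => h ▸ hu g hg) (fun h => h ▸ hw g hg)
    rcases mem_insert.mp he with rfl | heM <;> rcases mem_insert.mp hf with rfl | hfM
    · exact hne rfl
    · exact huw f hfM hxe hxf
    · exact huw e heM hxf hxe
    · exact hM.2 e heM f hfM hne x ⟨hxe, hxf⟩

lemma card_le_edgeCount [Finite V] (hM : IsMatchingFinset G M) : #M ≤ edgeCount G := by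
  rw [← Set.ncard_coe_finset]
  exact Set.ncard_le_ncard hM.1

lemma swap [DecidableEq V] (hM : IsMatchingFinset G M) {z p q : V} (hzp : s(z, p) ∈ M)
    (hpq : G.Adj p q) (hq : IsUncovered M q) :
    IsMatchingFinset G (insert s(p, q) (M.erase s(z, p))) ∧
      #(insert s(p, q) (M.erase s(z, p))) = #M ∧
      IsUncovered (insert s(p, q) (M.erase s(z, p))) z ∧
      ∀ y, IsUncovered M y → y ≠ q → IsUncovered (insert s(p, q) (M.erase s(z, p))) y := by
  have hq' : IsUncovered (M.erase s(z, p)) q := hq.mono (erase_subset _ _)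
  refine ⟨(hM.mono (erase_subset _ _)).insert hpq
    (hM.isUncovered_erase hzp (Sym2.mem_mk_right z p)) hq', ?_, ?_, ?_⟩
  · rw [card_insert_of_notMem fun h => hq' _ h (Sym2.mem_mk_right p q),
      card_erase_add_one hzp]
  · rw [isUncovered_insert_mk]
    exact ⟨(hM.adj hzp).ne, fun h => hq _ hzp (h ▸ Sym2.mem_mk_left z p),
      hM.isUncovered_erase hzp (Sym2.mem_mk_left z p)⟩
  · intro y hy hyq
    rw [isUncovered_insert_mk]
    exact ⟨fun h => hy _ hzp (h ▸ Sym2.mem_mk_right z p), hyq, hy.mono (erase_subset _ _)⟩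

end IsMatchingFinset

section Maximum
variable [Finite V]

lemma bddAbove_matchingCards (G : SimpleGraph V) :
    BddAbove {n | ∃ M : Finset (Sym2 V), IsMatchingFinset G M ∧ #M = n} :=
  ⟨edgeCount G, by rintro _ ⟨M, hM, rfl⟩; exact hM.card_le_edgeCount⟩

lemma IsMatchingFinset.card_le_matNum (hM : IsMatchingFinset G M) : #M ≤ matNum G :=
  le_csSup (bddAbove_matchingCards G) ⟨M, hM, rfl⟩

lemma exists_isMaximumMatching (G : SimpleGraph V) : ∃ M, IsMaximumMatching G M :=
  Nat.sSup_mem (s := {n | ∃ M : Finset (Sym2 V), IsMatchingFinset G M ∧ #M = n})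
    ⟨0, ∅, ⟨by simp, by simp⟩, rfl⟩ (bddAbove_matchingCards G)

lemma IsMaximumMatching.not_isUncovered_of_adj (hM : IsMaximumMatching G M) (hadj : G.Adj u w)
    (hu : IsUncovered M u) : ¬ IsUncovered M w := by
  classical
  intro hw
  have := (hM.1.insert hadj hu hw).card_le_matNum
  rw [card_insert_of_notMem fun h => hu _ h (Sym2.mem_mk_left u w), hM.2] at this
  omega

end Maximum

section Embedding
variable {W : Type*} {H : SimpleGraph W}

lemma IsMatchingFinset.image [DecidableEq W] (f : G ↪g H) (hM : IsMatchingFinset G M) :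
    IsMatchingFinset H (M.image (Sym2.map f)) := by
  refine ⟨?_, ?_⟩
  · intro _ hd
    obtain ⟨e, he, rfl⟩ := mem_image.mp (mem_coe.mp hd)
    exact f.toHom.map_mem_edgeSet (hM.1 he)
  · intro _ hd _ hd' hne w ⟨hwe, hwe'⟩
    obtain ⟨e, he, rfl⟩ := mem_image.mp hd
    obtain ⟨e', he', rfl⟩ := mem_image.mp hd'
    obtain ⟨v, hv, rfl⟩ := Sym2.mem_map.mp hwe
    obtain ⟨v', hv', hvv'⟩ := Sym2.mem_map.mp hwe'
    exact hM.2 e he e' he' (fun h => hne (h ▸ rfl)) v ⟨hv, f.injective hvv' ▸ hv'⟩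

lemma IsMatchingFinset.preimage (f : G ↪g H) {M : Finset (Sym2 W)} (hM : IsMatchingFinset H M) :
    IsMatchingFinset G (M.preimage (Sym2.map f) (Sym2.map.injective f.injective).injOn) := by
  refine ⟨fun e he => f.map_mem_edgeSet_iff.mp (hM.1 (mem_preimage.mp he)), ?_⟩
  intro e he e' he' hne v ⟨hve, hve'⟩
  exact hM.2 _ (mem_preimage.mp he) _ (mem_preimage.mp he')
    (fun h => hne (Sym2.map.injective f.injective h)) (f v)
    ⟨Sym2.mem_map.mpr ⟨v, hve, rfl⟩, Sym2.mem_map.mpr ⟨v, hve', rfl⟩⟩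

lemma matNum_le_of_embedding [Finite V] [Finite W] (f : G ↪g H) : matNum G ≤ matNum H := by
  classical
  obtain ⟨M, hM, hcard⟩ := exists_isMaximumMatching G
  rw [← hcard, ← card_image_of_injective M (Sym2.map.injective f.injective)]
  exact (hM.image f).card_le_matNum

end Embedding

lemma Sym2.mem_range_map_val {s : Set V} {e : Sym2 V} (h : ∀ v ∈ e, v ∈ s) :
    e ∈ Set.range (Sym2.map ((↑) : s → V)) := by
  induction e using Sym2.ind with
  | _ a b => exact ⟨s(⟨a, h a (Sym2.mem_mk_left a b)⟩, ⟨b, h b (Sym2.mem_mk_right a b)⟩), rfl⟩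

lemma IsMatchingFinset.card_le_matNum_induce [Finite V] {s : Set V} (hM : IsMatchingFinset G M)
    (hs : ∀ e ∈ M, ∀ v ∈ e, v ∈ s) : #M ≤ matNum (G.induce s) := by
  classical
  have hrange : ∀ e ∈ M, e ∈ Set.range (Sym2.map (SimpleGraph.Embedding.induce (G := G) s)) :=
    fun e he => Sym2.mem_range_map_val (hs e he)
  have := (hM.preimage (SimpleGraph.Embedding.induce s)).card_le_matNum
  rwa [card_preimage, filter_true_of_mem hrange] at this

lemma Finset.card_sdiff_insert_erase_lt {α : Type*} [DecidableEq α] {s t : Finset α} {a b : α}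
    (ha : a ∈ s) (hat : a ∉ t) (hb : b ∉ s) : #(s \ insert a (t.erase b)) < #(s \ t) := by
  refine card_lt_card ⟨fun x hx => ?_, fun h => ?_⟩
  · simp only [mem_sdiff, mem_insert, mem_erase, not_or, not_and] at hx ⊢
    exact ⟨hx.1, fun hxt => hx.2.2 (fun hxb => hb (hxb ▸ hx.1)) hxt⟩
  · simpa [ha, hat] using h (mem_sdiff.mpr ⟨ha, hat⟩)

/-- Alternating-path argument: switching `M` along the path from `z` whose edges alternate
between `M` and `N` uncovers `z` and covers at most the far end `r` of the path; the path cannot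
end with an edge of `M`, since `N` would then be augmentable. The induction on `#(M \ N)` follows
the path two edges at a time. -/
theorem IsMatchingFinset.exists_uncover [Finite V] [DecidableEq V] (hM : IsMatchingFinset G M)
    (hN : IsMaximumMatching G N) {z : V} (hz : IsUncovered N z) :
    ∃ M' r, IsMatchingFinset G M' ∧ #M' = #M ∧ M' ⊆ M ∪ N ∧ IsUncovered M' z ∧
      ∀ y, IsUncovered M y → y ≠ r → IsUncovered M' y := by
  induction hk : #(M \ N) using Nat.strong_induction_on generalizing N z with
  | _ k ih =>
  by_cases hzM : IsUncovered M z
  · exact ⟨M, z, hM, rfl, subset_union_left, hzM, fun y hy _ => hy⟩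
  obtain ⟨p, hzp⟩ := exists_mk_mem_of_not_isUncovered hzM
  obtain ⟨q, hpq⟩ := exists_mk_mem_of_not_isUncovered (hN.not_isUncovered_of_adj (hM.adj hzp) hz)
  have hzpN : s(z, p) ∉ N := fun h => hz _ h (Sym2.mem_mk_left z p)
  have hpqM : s(p, q) ∉ M := fun h =>
    hzpN (hM.eq_of_mem hzp h (Sym2.mem_mk_right z p) (Sym2.mem_mk_left p q) ▸ hpq)
  by_cases hqM : IsUncovered M q
  · obtain ⟨hM', hcard, hzM', hkeep⟩ := hM.swap hzp (hN.1.adj hpq) hqM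
    refine ⟨_, q, hM', hcard, fun e he => ?_, hzM', hkeep⟩
    simp only [mem_insert, mem_erase, mem_union] at he ⊢
    grind
  -- Switch the first two edges of the path in `N` and continue from `q`.
  have hqpN : s(q, p) ∈ N := Sym2.eq_swap ▸ hpq
  obtain ⟨hN₁, hN₁card, hqN₁, -⟩ := hN.1.swap hqpN (hM.adj hzp).symm hz
  obtain ⟨M₁, r, hM₁, hcard₁, hsub₁, hqM₁, hkeep₁⟩ :=
    ih _ (hk ▸ card_sdiff_insert_erase_lt (Sym2.eq_swap ▸ hzp) (Sym2.eq_swap ▸ hzpN)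
      (Sym2.eq_swap ▸ hpqM))
      ⟨hN₁, hN₁card.trans hN.2⟩ hqN₁ rfl
  have hsub : M ∪ insert s(p, z) (N.erase s(q, p)) ⊆ M ∪ N := by
    intro e he
    simp only [mem_insert, mem_erase, mem_union] at he ⊢
    grind [Sym2.eq_swap]
  by_cases hzM₁ : IsUncovered M₁ z
  · exact ⟨M₁, r, hM₁, hcard₁, hsub₁.trans hsub, hzM₁, hkeep₁⟩
  have hzpM₁ : s(z, p) ∈ M₁ := by
    obtain ⟨p', hzp'⟩ := exists_mk_mem_of_not_isUncovered hzM₁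
    convert hzp' using 1
    rcases mem_union.mp (hsub₁ hzp') with h | h
    · exact hM.eq_of_mem hzp h (Sym2.mem_mk_left z p) (Sym2.mem_mk_left z p')
    · exact Sym2.eq_swap.trans <|
        hN₁.eq_of_mem (mem_insert_self _ _) h (Sym2.mem_mk_right p z) (Sym2.mem_mk_left z p')
  obtain ⟨hM', hcard, hzM', hkeep⟩ := hM₁.swap hzpM₁ (hN.1.adj hpq) hqM₁
  refine ⟨_, r, hM', hcard.trans hcard₁, fun e he => ?_, hzM', fun y hy hyr => hkeep y
    (hkeep₁ y hy hyr) fun hyq => hqM (hyq ▸ hy)⟩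
  have := @hsub₁ e
  simp only [mem_insert, mem_erase, mem_union] at he this ⊢
  grind [Sym2.eq_swap]

/-- A form of Gallai's lemma. Along a walk from `u` to `w`, `exists_uncover` moves the uncovered
vertex `u` one step towards `w` while keeping the matching maximum. -/
theorem IsMaximumMatching.eq_of_reachable [Finite V]
    (hmiss : ∀ v, ∃ N, IsMaximumMatching G N ∧ IsUncovered N v) (hM : IsMaximumMatching G M)
    (hu : IsUncovered M u) (hw : IsUncovered M w) (huw : G.Reachable u w) : u = w := by
  classical
  obtain ⟨walk⟩ := huw
  induction walk generalizing M with
  | nil => rfl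
  | @cons u z w hadj walk ih =>
    by_contra huw
    have hzM : ¬ IsUncovered M z := hM.not_isUncovered_of_adj hadj hu
    obtain ⟨N, hN, hzN⟩ := hmiss z
    obtain ⟨M', r, hM', hcard, -, hzM', hkeep⟩ := hM.1.exists_uncover hN hzN
    have hM'max : IsMaximumMatching G M' := ⟨hM', hcard.trans hM.2⟩
    by_cases hur : u = r
    · have hzw : z = w := ih hM'max hzM' (hkeep w hw fun h => huw (hur.trans h.symm))
      exact hzM (hzw ▸ hw)
    · exact hM'max.not_isUncovered_of_adj hadj (hkeep u hu hur) hzM'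

/-- Each vertex has at most `#C` neighbours, being joined only to vertices of its own component,
and each vertex of `C` has at most `#C + 1` vertices in its component; double counting the pairs
`(u, v)` with `v ∈ C` in the component of `u` gives the bound. -/
theorem two_mul_edgeCount_le [Fintype V] (C : Finset V)
    (hC : ∀ u w, u ∉ C → w ∉ C → G.Reachable u w → u = w) :
    2 * edgeCount G ≤ #C * (#C + 1) := by
  classical
  have hcomp : ∀ u, #{w | G.Reachable u w} ≤ #{w ∈ C | G.Reachable u w} + 1 := by
    intro u
    have hout : #{w | G.Reachable u w ∧ w ∉ C} ≤ 1 := card_le_one.mpr fun a ha b hb => by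
      simp only [mem_filter, mem_univ, true_and] at ha hb
      exact hC a b ha.2 hb.2 (ha.1.symm.trans hb.1)
    calc #{w | G.Reachable u w}
        ≤ #({w ∈ C | G.Reachable u w} ∪ ({w | G.Reachable u w ∧ w ∉ C} : Finset V)) :=
          card_le_card fun w => by simp only [mem_filter, mem_univ, true_and, mem_union]; tauto
      _ ≤ _ := (card_union_le _ _).trans (by omega)
  have hdeg : ∀ u, G.degree u ≤ #{w ∈ C | G.Reachable u w} := by
    intro u
    have : insert u (G.neighborFinset u) ⊆ ({w | G.Reachable u w} : Finset V) := by
      intro w hw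
      rcases mem_insert.mp hw with rfl | hw
      · simp
      · simpa using ((G.mem_neighborFinset u w).mp hw).reachable
    have := card_le_card this
    rw [card_insert_of_notMem (G.notMem_neighborFinset_self u), G.card_neighborFinset_eq_degree]
      at this
    linarith [hcomp u]
  calc 2 * edgeCount G = ∑ u, G.degree u := by
        rw [G.sum_degrees_eq_twice_card_edges, edgeCount, Set.ncard_eq_toFinset_card']; rfl
    _ ≤ ∑ u, #{w ∈ C | G.Reachable u w} := sum_le_sum fun u _ => hdeg u
    _ = ∑ v ∈ C, #{u | G.Reachable u v} := sum_card_bipartiteAbove_eq_sum_card_bipartiteBelow _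
    _ ≤ ∑ _v ∈ C, (#C + 1) := sum_le_sum fun v _ => by
        simp_rw [G.reachable_comm (u := _) (v := v)]
        exact (hcomp v).trans (by gcongr; exact filter_subset _ _)
    _ = #C * (#C + 1) := by rw [sum_const, smul_eq_mul]

theorem edgeCount_le_matNum_mul [Fintype V]
    (hmiss : ∀ v, ∃ N, IsMaximumMatching G N ∧ IsUncovered N v) :
    edgeCount G ≤ matNum G * (2 * matNum G + 1) := by
  classical
  obtain ⟨M, hM⟩ := exists_isMaximumMatching G
  set C := M.biUnion Sym2.toFinset
  have hC : ∀ v, v ∉ C ↔ IsUncovered M v := by simp [C, IsUncovered]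
  have hCcard : #C ≤ 2 * matNum G := by
    rw [← hM.2, mul_comm]
    refine card_biUnion_le_card_mul _ _ _ fun e _ => ?_
    rw [Sym2.card_toFinset]
    split_ifs <;> omega
  have := two_mul_edgeCount_le C fun u w hu hw =>
    hM.eq_of_reachable hmiss ((hC u).mp hu) ((hC w).mp hw)
  have : #C * (#C + 1) ≤ 2 * matNum G * (2 * matNum G + 1) := by gcongr
  linarith

section Degree
variable [Finite V]

lemma ncard_neighborSet_le_maxDeg (v : V) : (G.neighborSet v).ncard ≤ maxDeg G :=
  le_ciSup (f := fun v => (G.neighborSet v).ncard) (Set.finite_range _).bddAbove v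

lemma maxDeg_mono {H : SimpleGraph V} (h : G ≤ H) : maxDeg G ≤ maxDeg H :=
  ciSup_mono (Set.finite_range _).bddAbove fun _ => Set.ncard_le_ncard fun _ hw => h hw

lemma edgeCount_deleteIncidenceSet_add (G : SimpleGraph V) (x : V) :
    edgeCount (G.deleteIncidenceSet x) + (G.neighborSet x).ncard = edgeCount G := by
  classical
  rw [edgeCount, edgeCount, G.edgeSet_deleteIncidenceSet, ← Nat.card_coe_set_eq (G.neighborSet x),
    ← Nat.card_congr (G.incidenceSetEquivNeighborSet x), Nat.card_coe_set_eq]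
  exact Set.ncard_sdiff_add_ncard_of_subset (G.incidenceSet_subset x)

end Degree

lemma IsMatchingFinset.of_le {H : SimpleGraph V} (hM : IsMatchingFinset G M) (h : G ≤ H) :
    IsMatchingFinset H M :=
  ⟨hM.1.trans (SimpleGraph.edgeSet_mono h), hM.2⟩

lemma matNum_deleteIncidenceSet_lt [Finite V] {x : V}
    (hx : ∀ M, IsMaximumMatching G M → ¬ IsUncovered M x) :
    matNum (G.deleteIncidenceSet x) < matNum G := by
  obtain ⟨M, hM, hcard⟩ := exists_isMaximumMatching (G.deleteIncidenceSet x)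
  have hMG : IsMatchingFinset G M := hM.of_le (G.deleteIncidenceSet_le x)
  have hxM : IsUncovered M x := fun e he hxe => by
    have := hM.1 he
    rw [SimpleGraph.edgeSet_deleteIncidenceSet] at this
    exact this.2 ⟨this.1, hxe⟩
  exact hcard ▸ hMG.card_le_matNum.lt_of_ne fun h => hx M ⟨hMG, h⟩ hxM

lemma edgeCount_le_mul_matNum_of_deleteIncidenceSet [Finite V] {Δ : ℕ} {x : V}
    (hx : ∀ M, IsMaximumMatching G M → ¬ IsUncovered M x) (hdeg : maxDeg G ≤ Δ)
    (hdel : edgeCount (G.deleteIncidenceSet x) ≤ Δ * matNum (G.deleteIncidenceSet x)) :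
    edgeCount G ≤ Δ * matNum G := by
  have hlt := matNum_deleteIncidenceSet_lt hx
  have hsplit := edgeCount_deleteIncidenceSet_add G x
  have hdegx := (ncard_neighborSet_le_maxDeg (G := G) x).trans hdeg
  calc edgeCount G ≤ Δ * (matNum (G.deleteIncidenceSet x) + 1) := by rw [mul_add_one]; omega
    _ ≤ Δ * matNum G := Nat.mul_le_mul_left _ hlt

theorem edgeCount_le_mul_matNum [Fintype V] {Δ : ℕ} (hdeg : maxDeg G ≤ Δ)
    (hν : 2 * matNum G < Δ) : edgeCount G ≤ Δ * matNum G := by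
  induction hk : matNum G using Nat.strong_induction_on generalizing G with
  | _ k ih =>
  by_cases hmiss : ∀ v, ∃ N, IsMaximumMatching G N ∧ IsUncovered N v
  · calc edgeCount G ≤ k * (2 * k + 1) := hk ▸ edgeCount_le_matNum_mul hmiss
      _ ≤ k * Δ := Nat.mul_le_mul_left _ (by omega)
      _ = Δ * k := mul_comm _ _
  · push Not at hmiss
    obtain ⟨x, hx⟩ := hmiss
    subst hk
    exact edgeCount_le_mul_matNum_of_deleteIncidenceSet hx hdeg <|
      ih _ (matNum_deleteIncidenceSet_lt hx) ((maxDeg_mono (G.deleteIncidenceSet_le x)).trans hdeg)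
        (by have := matNum_deleteIncidenceSet_lt hx; omega) rfl

end

theorem critical_extremal_matNum_delete_general (Δ : ℕ) (hΔ : 2 ≤ Δ)
    {V : Type*} [Fintype V] (G : SimpleGraph V)
    (hdeg : maxDeg G = Δ) (hmat : matNum G = (Δ + 1) / 2)
    (hE : edgeCount G = Δ * ((Δ + 1) / 2) + Δ / 2) :
    ∀ x : V, matNum (G.induce {u | u ≠ x}) = matNum G := by
  intro x
  refine le_antisymm (matNum_le_of_embedding (SimpleGraph.Embedding.induce _)) ?_
  by_contra! hlt
  have hx : ∀ M, IsMaximumMatching G M → ¬ IsUncovered M x :=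
    fun M hM hxM => hlt.not_ge <|
      hM.2 ▸ hM.1.card_le_matNum_induce fun e he v hv hvx => hxM e he (hvx ▸ hv)
  have hdel := matNum_deleteIncidenceSet_lt hx
  have hbound := edgeCount_le_mul_matNum_of_deleteIncidenceSet hx hdeg.le <|
    edgeCount_le_mul_matNum ((maxDeg_mono (G.deleteIncidenceSet_le x)).trans hdeg.le)
      (by omega)
  rw [hE, hmat] at hbound
  omega

/-- If `Δ ≥ 2`, `G` has no isolated vertices, `Δ(G) = Δ`,
`ν(G) = ⌈Δ/2⌉` and `|E(G)| = Δ⌈Δ/2⌉ + ⌊Δ/2⌋`, then `ν(G \ x) = ν(G)` for every vertex. -/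
theorem critical_extremal_matNum_delete (Δ : ℕ) (hΔ : 2 ≤ Δ)
    {V : Type*} [Fintype V] (G : SimpleGraph V)
    (hiso : ∀ v, ∃ u, G.Adj v u)
    (hdeg : maxDeg G = Δ) (hmat : matNum G = (Δ + 1) / 2)
    (hE : edgeCount G = Δ * ((Δ + 1) / 2) + Δ / 2) :
    ∀ x : V, matNum (G.induce {u | u ≠ x}) = matNum G :=
  critical_extremal_matNum_delete_general Δ hΔ G hdeg hmat hE
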